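/- Closure of weak chain upper gradients: suppose u_j → u pointwise m-almost everywhere, g_j is a p-weak ε-upper gradient of u_j for each j, and g_j → g in L^p(X,m). Then g is a p-weak ε-upper gradient of u. -/

import Mathlib

open scoped ENNReal

variable {X : Type*} [MetricSpace X]

/-- `q 0, …, q N` is an `ε`-chain: consecutive points at distance at most `ε`. -/
def IsEpsChain (ε : ℝ) (N : ℕ) (q : ℕ → X) : Prop :=
  ∀ i < N, dist (q i) (q (i + 1)) ≤ ε

/-- The chain integral `∫_c g = Σ (g(q_i)+g(q_{i+1}))/2 · d(q_i,q_{i+1})`. -/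
noncomputable def chainInt (g : X → ℝ≥0∞) (N : ℕ) (q : ℕ → X) : ℝ≥0∞ :=
  ∑ i ∈ Finset.range N,
    (g (q i) + g (q (i + 1))) / 2 * ENNReal.ofReal (dist (q i) (q (i + 1)))

open MeasureTheory

/-- A chain is encoded as a pair `(N, q)`, representing the points `q 0, …, q N`. -/
abbrev Chain (X : Type*) := ℕ × (ℕ → X)

/-- The `(ε,p)`-modulus of a family of chains `C`:
`inf { ∫ ρ^p dm : ρ Borel nonnegative, ∫_c ρ ≥ 1 for every ε-chain c ∈ C }`. -/
noncomputable def chainMod [MeasurableSpace X] (m : Measure X) (p ε : ℝ)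
    (C : Set (Chain X)) : ℝ≥0∞ :=
  ⨅ (ρ : X → ℝ≥0∞) (_ : Measurable ρ ∧
      ∀ c ∈ C, IsEpsChain ε c.1 c.2 → 1 ≤ chainInt ρ c.1 c.2),
    ∫⁻ x, ρ x ^ p ∂m

/-- Symmetric difference in `ℝ≥0∞`, playing the role of `|a - b|`. -/
noncomputable def ediff (a b : ℝ≥0∞) : ℝ≥0∞ := (a - b) + (b - a)

/-- `g` is a `p`-weak `ε`-upper gradient of `u`: the upper gradient inequality holds
along all chains outside a family of `(ε,p)`-chain modulus zero. -/
def IsWeakEpsUpperGradient [MeasurableSpace X] (m : Measure X) (p ε : ℝ)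
    (u : X → ℝ) (g : X → ℝ≥0∞) : Prop :=
  Measurable g ∧
  chainMod m p ε {c : Chain X |
    ¬ (ENNReal.ofReal |u (c.2 c.1) - u (c.2 0)| ≤ chainInt g c.1 c.2)} = 0

open Filter

section AuxLemmas

lemma chainInt_mono {f g : X → ℝ≥0∞} (h : ∀ x, f x ≤ g x) (N : ℕ) (q : ℕ → X) :
    chainInt f N q ≤ chainInt g N q := by
  refine Finset.sum_le_sum fun i _ => ?_
  gcongr
  · exact h _
  · exact h _

lemma chainInt_smul (a : ℝ≥0∞) (f : X → ℝ≥0∞) (N : ℕ) (q : ℕ → X) :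
    chainInt (fun x => a * f x) N q = a * chainInt f N q := by
  unfold chainInt
  rw [Finset.mul_sum]
  refine Finset.sum_congr rfl fun i _ => ?_
  simp only [div_eq_mul_inv]
  ring

lemma chainInt_add (f g : X → ℝ≥0∞) (N : ℕ) (q : ℕ → X) :
    chainInt (fun x => f x + g x) N q = chainInt f N q + chainInt g N q := by
  unfold chainInt
  rw [← Finset.sum_add_distrib]
  refine Finset.sum_congr rfl fun i _ => ?_
  simp only [div_eq_mul_inv]
  ring

lemma chainInt_eq_top {ρ : X → ℝ≥0∞} {N : ℕ} {q : ℕ → X} {j : ℕ} (hj : j < N)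
    (hd : 0 < dist (q j) (q (j + 1))) (hρ : ρ (q j) = ∞ ∨ ρ (q (j + 1)) = ∞) :
    chainInt ρ N q = ∞ := by
  have h1 : ρ (q j) + ρ (q (j + 1)) = ∞ := by rcases hρ with h | h <;> simp [h]
  have hterm : (ρ (q j) + ρ (q (j + 1))) / 2 * ENNReal.ofReal (dist (q j) (q (j + 1))) = ∞ := by
    rw [h1, ENNReal.top_div_of_ne_top (by norm_num), ENNReal.top_mul
      (ENNReal.ofReal_pos.2 hd).ne']
  refine top_le_iff.1 ?_
  rw [← hterm]
  exact Finset.single_le_sum (f := fun i => (ρ (q i) + ρ (q (i + 1))) / 2 *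
    ENNReal.ofReal (dist (q i) (q (i + 1)))) (fun i _ => zero_le) (Finset.mem_range.2 hj)

lemma chain_const {N : ℕ} {q : ℕ → X} (h : ∀ i < N, ¬ 0 < dist (q i) (q (i + 1))) :
    q N = q 0 := by
  induction N with
  | zero => rfl
  | succ n ih =>
    have h1 : dist (q n) (q (n + 1)) = 0 :=
      le_antisymm (not_lt.1 (h n (Nat.lt_succ_self n))) dist_nonneg
    rw [← dist_eq_zero.1 h1]
    exact ih fun i hi => h i (hi.trans (Nat.lt_succ_self n))

lemma exists_pos_edge_endpoint {A : Set X} {N : ℕ} {q : ℕ → X}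
    (hpos : ∃ i < N, 0 < dist (q i) (q (i + 1))) (hA : q 0 ∈ A ∨ q N ∈ A) :
    ∃ j < N, 0 < dist (q j) (q (j + 1)) ∧ (q j ∈ A ∨ q (j + 1) ∈ A) := by
  classical
  rcases hA with hA | hA
  · -- first positive edge
    have hex : ∃ i, i < N ∧ 0 < dist (q i) (q (i + 1)) := by
      obtain ⟨i, h1, h2⟩ := hpos; exact ⟨i, h1, h2⟩
    set j := Nat.find hex with hjdef
    obtain ⟨hjN, hjpos⟩ := Nat.find_spec hex
    refine ⟨j, hjN, hjpos, Or.inl ?_⟩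
    have : q j = q 0 := by
      refine chain_const fun i hi => ?_
      have := Nat.find_min hex hi
      intro hpos'
      exact this ⟨(hi.trans hjN), hpos'⟩
    rw [this]; exact hA
  · -- last positive edge
    have hex : ∃ i, 0 < dist (q i) (q (i + 1)) ∧ i < N := by
      obtain ⟨i, h1, h2⟩ := hpos; exact ⟨i, h2, h1⟩
    set P : ℕ → Prop := fun i => 0 < dist (q i) (q (i + 1)) ∧ i < N with hP
    obtain ⟨i0, hi0pos, hi0N⟩ := hex
    have hspec : P (Nat.findGreatest P N) :=
      Nat.findGreatest_spec (m := i0) hi0N.le ⟨hi0pos, hi0N⟩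
    set j := Nat.findGreatest P N with hjdef
    refine ⟨j, hspec.2, hspec.1, Or.inr ?_⟩
    have hqN : q N = q (j + 1) := by
      have key : ∀ i < N - (j + 1), ¬ 0 < dist (q (j + 1 + i)) (q (j + 1 + i + 1)) := by
        intro i hi hpos'
        have h1 : j < j + 1 + i := by omega
        have h2 : j + 1 + i ≤ N := by omega
        exact Nat.findGreatest_is_greatest h1 h2 ⟨hpos', by omega⟩
      have := chain_const (q := fun i => q (j + 1 + i)) key
      simpa [show j + 1 + (N - (j + 1)) = N by omega] using this
    rw [← hqN]; exact hA

lemma ennreal_iSup_rpow {p : ℝ} (hp : 0 < p) (a : ℕ → ℝ≥0∞) :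
    (⨆ n, a n) ^ p = ⨆ n, a n ^ p := by
  apply le_antisymm
  · have h1 : ∀ n, a n ≤ (⨆ n, a n ^ p) ^ p⁻¹ := fun n => by
      rw [← ENNReal.rpow_rpow_inv hp.ne' (a n)]
      exact ENNReal.rpow_le_rpow (le_iSup (fun n => a n ^ p) n) (by positivity)
    calc (⨆ n, a n) ^ p ≤ ((⨆ n, a n ^ p) ^ p⁻¹) ^ p :=
          ENNReal.rpow_le_rpow (iSup_le h1) hp.le
      _ = ⨆ n, a n ^ p := ENNReal.rpow_inv_rpow hp.ne' _
  · exact iSup_le fun n => ENNReal.rpow_le_rpow (le_iSup a n) hp.le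

lemma lintegral_tsum_rpow_le {α : Type*} [MeasurableSpace α] (m : Measure α) {p : ℝ}
    (hp : 1 ≤ p) {f : ℕ → α → ℝ≥0∞} (hf : ∀ k, Measurable (f k)) :
    ∫⁻ x, (∑' k, f k x) ^ p ∂m ≤ (∑' k, (∫⁻ x, f k x ^ p ∂m) ^ (1 / p)) ^ p := by
  have hp0 : (0:ℝ) < p := one_pos.trans_le hp
  have hsummeas : ∀ n, Measurable fun x => ∑ k ∈ Finset.range n, f k x :=
    fun n => Finset.measurable_sum _ fun k _ => hf k
  have key : ∀ n, (∫⁻ x, (∑ k ∈ Finset.range n, f k x) ^ p ∂m) ^ (1 / p) ≤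
      ∑ k ∈ Finset.range n, (∫⁻ x, f k x ^ p ∂m) ^ (1 / p) := by
    intro n
    induction n with
    | zero =>
      have hz : (∫⁻ x, (∑ k ∈ Finset.range 0, f k x) ^ p ∂m) = 0 := by
        simp [ENNReal.zero_rpow_of_pos hp0]
      rw [hz, ENNReal.zero_rpow_of_pos (one_div_pos.2 hp0)]
      simp
    | succ n ih =>
      have hadd := ENNReal.lintegral_Lp_add_le (μ := m)
        (f := fun x => ∑ k ∈ Finset.range n, f k x) (g := f n)
        (hsummeas n).aemeasurable (hf n).aemeasurable hp
      have hfun : ∀ x, ((fun x => ∑ k ∈ Finset.range n, f k x) + f n) x =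
          ∑ k ∈ Finset.range (n + 1), f k x := by
        intro x; simp [Finset.sum_range_succ]
      rw [Finset.sum_range_succ]
      calc (∫⁻ x, (∑ k ∈ Finset.range (n + 1), f k x) ^ p ∂m) ^ (1 / p)
          = (∫⁻ x, (((fun x => ∑ k ∈ Finset.range n, f k x) + f n) x) ^ p ∂m) ^ (1 / p) := by
            congr 1; exact lintegral_congr fun x => by rw [hfun x]
        _ ≤ (∫⁻ x, (∑ k ∈ Finset.range n, f k x) ^ p ∂m) ^ (1 / p) +
            (∫⁻ x, f n x ^ p ∂m) ^ (1 / p) := hadd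
        _ ≤ (∑ k ∈ Finset.range n, (∫⁻ x, f k x ^ p ∂m) ^ (1 / p)) +
            (∫⁻ x, f n x ^ p ∂m) ^ (1 / p) := by gcongr
  have hmono : Monotone fun n => fun x => (∑ k ∈ Finset.range n, f k x) ^ p := by
    refine monotone_nat_of_le_succ fun n x => ?_
    exact ENNReal.rpow_le_rpow (Finset.sum_le_sum_of_subset
      (Finset.range_subset_range.2 (Nat.le_succ n))) hp0.le
  calc ∫⁻ x, (∑' k, f k x) ^ p ∂m
      = ∫⁻ x, ⨆ n, (∑ k ∈ Finset.range n, f k x) ^ p ∂m := by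
        refine lintegral_congr fun x => ?_
        rw [ENNReal.tsum_eq_iSup_nat, ennreal_iSup_rpow hp0]
    _ = ⨆ n, ∫⁻ x, (∑ k ∈ Finset.range n, f k x) ^ p ∂m :=
        lintegral_iSup (fun n => (hsummeas n).pow_const p) hmono
    _ ≤ ⨆ n, (∑ k ∈ Finset.range n, (∫⁻ x, f k x ^ p ∂m) ^ (1 / p)) ^ p := by
        refine iSup_mono fun n => ?_
        have h1 : ∫⁻ x, (∑ k ∈ Finset.range n, f k x) ^ p ∂m =
            ((∫⁻ x, (∑ k ∈ Finset.range n, f k x) ^ p ∂m) ^ (1 / p)) ^ p := by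
          rw [one_div, ENNReal.rpow_inv_rpow hp0.ne']
        rw [h1]
        exact ENNReal.rpow_le_rpow (key n) hp0.le
    _ ≤ (∑' k, (∫⁻ x, f k x ^ p ∂m) ^ (1 / p)) ^ p :=
        iSup_le fun n => ENNReal.rpow_le_rpow (ENNReal.sum_le_tsum _) hp0.le

lemma exists_admissible [MeasurableSpace X] {m : Measure X} {p ε : ℝ} {C : Set (Chain X)}
    (h0 : chainMod m p ε C = 0) {δ : ℝ≥0∞} (hδ : 0 < δ) :
    ∃ ρ : X → ℝ≥0∞, Measurable ρ ∧
      (∀ c ∈ C, IsEpsChain ε c.1 c.2 → 1 ≤ chainInt ρ c.1 c.2) ∧ ∫⁻ x, ρ x ^ p ∂m ≤ δ := by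
  have h : chainMod m p ε C < δ := by rw [h0]; exact hδ
  rw [chainMod] at h
  obtain ⟨ρ, hρ⟩ := iInf_lt_iff.1 h
  by_cases hP : Measurable ρ ∧ ∀ c ∈ C, IsEpsChain ε c.1 c.2 → 1 ≤ chainInt ρ c.1 c.2
  · exact ⟨ρ, hP.1, hP.2, by rw [iInf_pos hP] at hρ; exact hρ.le⟩
  · rw [iInf_neg hP] at hρ; exact absurd hρ not_top_lt

end AuxLemmas

set_option maxHeartbeats 2000000 in
/-- Closure of weak chain upper gradients: if `u_j → u` pointwise `m`-a.e.,
`g_j` is a `p`-weak `ε`-upper gradient of `u_j`, and `g_j → g` in `L^p`, then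
`g` is a `p`-weak `ε`-upper gradient of `u`. -/
theorem weakEpsUpperGradient_closed [MeasurableSpace X] [BorelSpace X]
    (m : Measure X) (p ε : ℝ) (hp : 1 ≤ p) (hε : 0 < ε)
    (u : X → ℝ) (uj : ℕ → X → ℝ) (g : X → ℝ≥0∞) (gj : ℕ → X → ℝ≥0∞)
    (hae : ∀ᵐ x ∂m, Filter.Tendsto (fun j => uj j x) Filter.atTop (nhds (u x)))
    (hgj : ∀ j, IsWeakEpsUpperGradient m p ε (uj j) (gj j))
    (hg : Measurable g)
    (hconv : Filter.Tendsto (fun j => ∫⁻ x, ediff (gj j x) (g x) ^ p ∂m)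
      Filter.atTop (nhds 0)) :
    IsWeakEpsUpperGradient m p ε u g := by
  classical
  have hp0 : (0:ℝ) < p := one_pos.trans_le hp
  have h2ne0 : (2:ℝ≥0∞) ≠ 0 := by norm_num
  have h2netop : (2:ℝ≥0∞) ≠ ∞ := by norm_num
  have hinvne0 : (2:ℝ≥0∞)⁻¹ ≠ 0 := ENNReal.inv_ne_zero.2 h2netop
  have hinvnetop : (2:ℝ≥0∞)⁻¹ ≠ ∞ := ENNReal.inv_ne_top.2 h2ne0
  refine ⟨hg, ?_⟩
  -- the exceptional null set for pointwise convergence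
  have hS0 : m {x | ¬ Tendsto (fun j => uj j x) atTop (nhds (u x))} = 0 := ae_iff.1 hae
  set T := toMeasurable m {x | ¬ Tendsto (fun j => uj j x) atTop (nhds (u x))} with hTdef
  have hT0 : m T = 0 := by rw [hTdef, measure_toMeasurable]; exact hS0
  have hTm : MeasurableSet T := measurableSet_toMeasurable m _
  have hTc : ∀ x, x ∉ T → Tendsto (fun j => uj j x) atTop (nhds (u x)) := by
    intro x hx
    by_contra h
    exact hx (subset_toMeasurable m _ h)
  -- choice of a rapidly convergent subsequence
  have hb : ∀ k : ℕ, (0:ℝ≥0∞) < ((2:ℝ≥0∞)⁻¹ ^ (2 * k)) ^ p := by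
    intro k
    refine ENNReal.rpow_pos ?_ (ENNReal.pow_ne_top hinvnetop)
    exact ENNReal.pow_pos (by simpa [pos_iff_ne_zero] using hinvne0) _
  obtain ⟨φ, hφm, hφ⟩ := Filter.extraction_forall_of_eventually
    (P := fun k j => ∫⁻ x, ediff (gj j x) (g x) ^ p ∂m ≤ ((2:ℝ≥0∞)⁻¹ ^ (2 * k)) ^ p)
    (fun k => (hconv.eventually_lt_const (hb k)).mono fun j h => h.le)
  set e : ℕ → X → ℝ≥0∞ := fun k x => ediff (gj (φ k) x) (g x) with hedef
  have hemeas : ∀ k, Measurable (e k) := by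
    intro k
    exact (((hgj (φ k)).1.sub hg).add (hg.sub (hgj (φ k)).1))
  set f : ℕ → X → ℝ≥0∞ := fun k x => 2 ^ k * e k x with hfdef
  have hfmeas : ∀ k, Measurable (f k) := fun k => (hemeas k).const_mul _
  set R : X → ℝ≥0∞ := fun x => ∑' k, f k x with hRdef
  have hRmeas : Measurable R := Measurable.ennreal_tsum hfmeas
  have hcancel : ∀ k x, (2:ℝ≥0∞)⁻¹ ^ k * f k x = e k x := by
    intro k x
    rw [hfdef]
    simp only
    rw [← mul_assoc, ← mul_pow, ENNReal.inv_mul_cancel h2ne0 h2netop, one_pow, one_mul]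
  -- L^p bound on R
  have hnorm : ∀ k, (∫⁻ x, f k x ^ p ∂m) ^ (1 / p) ≤ (2:ℝ≥0∞)⁻¹ ^ k := by
    intro k
    have h1 : ∫⁻ x, f k x ^ p ∂m = ((2:ℝ≥0∞) ^ k) ^ p * ∫⁻ x, e k x ^ p ∂m := by
      rw [← lintegral_const_mul _ ((hemeas k).pow_const p)]
      exact lintegral_congr fun x => by
        rw [hfdef]; exact ENNReal.mul_rpow_of_nonneg _ _ hp0.le
    rw [h1]
    calc (((2:ℝ≥0∞) ^ k) ^ p * ∫⁻ x, e k x ^ p ∂m) ^ (1 / p)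
        ≤ (((2:ℝ≥0∞) ^ k) ^ p * ((2:ℝ≥0∞)⁻¹ ^ (2 * k)) ^ p) ^ (1 / p) := by
          exact ENNReal.rpow_le_rpow (mul_le_mul_right (hφ k) _) (by positivity)
      _ = (((2:ℝ≥0∞) ^ k * (2:ℝ≥0∞)⁻¹ ^ (2 * k)) ^ p) ^ (1 / p) := by
          rw [ENNReal.mul_rpow_of_nonneg _ _ hp0.le]
      _ = (2:ℝ≥0∞) ^ k * (2:ℝ≥0∞)⁻¹ ^ (2 * k) := by
          rw [one_div, ENNReal.rpow_rpow_inv hp0.ne']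
      _ = (2:ℝ≥0∞)⁻¹ ^ k := by
          rw [two_mul, pow_add, ← mul_assoc, ← mul_pow,
            ENNReal.mul_inv_cancel h2ne0 h2netop, one_pow, one_mul]
  have hIle : ∫⁻ x, R x ^ p ∂m ≤ 2 ^ p := by
    refine (lintegral_tsum_rpow_le m hp hfmeas).trans ?_
    refine ENNReal.rpow_le_rpow ?_ hp0.le
    refine (ENNReal.tsum_le_tsum hnorm).trans ?_
    rw [ENNReal.tsum_geometric]
    rw [ENNReal.one_sub_inv_two, inv_inv]
  have hInetop : ∫⁻ x, R x ^ p ∂m ≠ ∞ := by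
    refine ne_top_of_le_ne_top ?_ hIle
    exact (ENNReal.rpow_lt_top_of_nonneg hp0.le h2netop).ne
  -- main estimate: reduce to showing the modulus is at most any positive δ
  refine le_antisymm ?_ zero_le
  refine ENNReal.le_of_forall_pos_le_add fun δ hδ _ => ?_
  rw [zero_add]
  have hδ0 : (δ:ℝ≥0∞) ≠ 0 := by exact_mod_cast hδ.ne'
  have hδtop : (δ:ℝ≥0∞) ≠ ∞ := ENNReal.coe_ne_top
  have hδ20 : (0:ℝ≥0∞) < (δ:ℝ≥0∞) / 2 := ENNReal.div_pos hδ0 h2netop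
  -- admissible functions for each bad family of `uj j, gj j`
  have hsel : ∀ j : ℕ, ∃ ρ : X → ℝ≥0∞, Measurable ρ ∧
      (∀ c ∈ {c : Chain X | ¬ (ENNReal.ofReal |uj j (c.2 c.1) - uj j (c.2 0)| ≤
        chainInt (gj j) c.1 c.2)}, IsEpsChain ε c.1 c.2 → 1 ≤ chainInt ρ c.1 c.2) ∧
      ∫⁻ x, ρ x ^ p ∂m ≤ (δ:ℝ≥0∞) / 2 * (2:ℝ≥0∞)⁻¹ ^ (j + 1) := by
    intro j
    exact exists_admissible (hgj j).2 (ENNReal.mul_pos hδ20.ne' (pow_ne_zero (j+1) hinvne0))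
  choose ρA hρAmeas hρAadm hρAint using hsel
  -- the indicator of the exceptional set
  set ρT : X → ℝ≥0∞ := T.indicator (fun _ => ∞) with hρTdef
  have hρTmeas : Measurable ρT := measurable_const.indicator hTm
  have hρTint : ∫⁻ x, ρT x ^ p ∂m = 0 := by
    have h1 : ∀ x, ρT x ^ p = ρT x := by
      intro x
      rw [hρTdef]
      by_cases hx : x ∈ T
      · simp [Set.indicator_of_mem hx, ENNReal.top_rpow_of_pos hp0]
      · simp [Set.indicator_of_notMem hx, ENNReal.zero_rpow_of_pos hp0]
    rw [lintegral_congr h1, hρTdef, lintegral_indicator hTm]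
    simp [hT0]
  -- scaling factor for R
  obtain ⟨lam, hlam0, hlamI⟩ : ∃ lam : ℝ≥0∞, 0 < lam ∧
      lam ^ p * ∫⁻ x, R x ^ p ∂m ≤ (δ:ℝ≥0∞) / 2 := by
    by_cases hI0 : ∫⁻ x, R x ^ p ∂m = 0
    · exact ⟨1, one_pos, by simp [hI0]⟩
    · refine ⟨(((δ:ℝ≥0∞) / 2) / ∫⁻ x, R x ^ p ∂m) ^ p⁻¹ ⊓ 1, ?_, ?_⟩
      · refine lt_min ?_ one_pos
        refine ENNReal.rpow_pos (ENNReal.div_pos hδ20.ne' hInetop) ?_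
        exact (ENNReal.div_lt_top ((ENNReal.div_lt_top hδtop h2ne0).ne) hI0).ne
      · calc ((((δ:ℝ≥0∞) / 2) / ∫⁻ x, R x ^ p ∂m) ^ p⁻¹ ⊓ 1) ^ p * ∫⁻ x, R x ^ p ∂m
            ≤ ((((δ:ℝ≥0∞) / 2) / ∫⁻ x, R x ^ p ∂m) ^ p⁻¹) ^ p * ∫⁻ x, R x ^ p ∂m := by
              gcongr
              exact inf_le_left
          _ = (((δ:ℝ≥0∞) / 2) / ∫⁻ x, R x ^ p ∂m) * ∫⁻ x, R x ^ p ∂m := by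
              rw [ENNReal.rpow_inv_rpow hp0.ne']
          _ = (δ:ℝ≥0∞) / 2 := ENNReal.div_mul_cancel hI0 hInetop
  -- the total admissible function
  set ρtot : X → ℝ≥0∞ := fun x => ρT x ⊔ (lam * R x ⊔ ⨆ j, ρA j x) with hρtotdef
  have hρtotmeas : Measurable ρtot := by
    refine hρTmeas.max (Measurable.max (hRmeas.const_mul _) ?_)
    exact Measurable.iSup fun j => hρAmeas j
  have hle1 : ∀ x, ρT x ≤ ρtot x := fun x => le_sup_left
  have hle2 : ∀ x, lam * R x ≤ ρtot x := fun x => le_sup_left.trans le_sup_right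
  have hle3 : ∀ j x, ρA j x ≤ ρtot x := fun j x =>
    ((le_iSup (fun j => ρA j x) j).trans le_sup_right).trans le_sup_right
  -- integral bound for ρtot
  have hlamR : ∫⁻ x, (lam * R x) ^ p ∂m ≤ (δ:ℝ≥0∞) / 2 := by
    have h1 : ∫⁻ x, (lam * R x) ^ p ∂m = lam ^ p * ∫⁻ x, R x ^ p ∂m := by
      rw [← lintegral_const_mul _ (hRmeas.pow_const p)]
      exact lintegral_congr fun x => ENNReal.mul_rpow_of_nonneg _ _ hp0.le
    rw [h1]; exact hlamI
  have hsumA : ∫⁻ x, ∑' j, ρA j x ^ p ∂m ≤ (δ:ℝ≥0∞) / 2 := by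
    rw [lintegral_tsum fun j => ((hρAmeas j).pow_const p).aemeasurable]
    refine (ENNReal.tsum_le_tsum hρAint).trans ?_
    rw [ENNReal.tsum_mul_left, ENNReal.tsum_geometric_add_one,
      ENNReal.one_sub_inv_two, inv_inv,
      ENNReal.inv_mul_cancel h2ne0 h2netop, mul_one]
  have hρtotint : ∫⁻ x, ρtot x ^ p ∂m ≤ (δ:ℝ≥0∞) := by
    have hptw : ∀ x, ρtot x ^ p ≤ ρT x ^ p + ((lam * R x) ^ p + ∑' j, ρA j x ^ p) := by
      intro x
      rw [hρtotdef]
      simp only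
      have hmono : Monotone fun y : ℝ≥0∞ => y ^ p := fun a b hab => ENNReal.rpow_le_rpow hab hp0.le
      rw [hmono.map_sup, hmono.map_sup, ennreal_iSup_rpow hp0]
      refine sup_le (le_add_right le_rfl) (le_add_left ?_)
      refine sup_le (le_add_right le_rfl) (le_add_left ?_)
      exact iSup_le fun j => ENNReal.le_tsum j
    calc ∫⁻ x, ρtot x ^ p ∂m
        ≤ ∫⁻ x, ρT x ^ p + ((lam * R x) ^ p + ∑' j, ρA j x ^ p) ∂m := lintegral_mono hptw
      _ = (∫⁻ x, ρT x ^ p ∂m) + ((∫⁻ x, (lam * R x) ^ p ∂m) + ∫⁻ x, ∑' j, ρA j x ^ p ∂m) := by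
          rw [lintegral_add_left (hρTmeas.pow_const p),
            lintegral_add_left ((hRmeas.const_mul _).pow_const p)]
      _ ≤ 0 + ((δ:ℝ≥0∞) / 2 + (δ:ℝ≥0∞) / 2) := by
          exact add_le_add hρTint.le (add_le_add hlamR hsumA)
      _ = (δ:ℝ≥0∞) := by rw [zero_add, ENNReal.add_halves]
  -- admissibility of ρtot for the bad family of u, g
  refine le_trans (iInf₂_le ρtot ⟨hρtotmeas, ?_⟩) hρtotint
  intro c hc hchain
  simp only [Set.mem_setOf_eq] at hc
  by_cases hA : ∃ j, ¬ (ENNReal.ofReal |uj j (c.2 c.1) - uj j (c.2 0)| ≤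
      chainInt (gj j) c.1 c.2)
  · obtain ⟨j, hj⟩ := hA
    exact (hρAadm j c hj hchain).trans (chainInt_mono (hle3 j) _ _)
  push_neg at hA
  by_cases hend : c.2 0 ∈ T ∨ c.2 c.1 ∈ T
  · by_cases hpos : ∃ i < c.1, 0 < dist (c.2 i) (c.2 (i + 1))
    · obtain ⟨j, hjN, hjpos, hjmem⟩ := exists_pos_edge_endpoint hpos hend
      have htop : chainInt ρT c.1 c.2 = ∞ := by
        refine chainInt_eq_top hjN hjpos ?_
        rcases hjmem with h | h
        · exact Or.inl (by rw [hρTdef]; exact Set.indicator_of_mem h _)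
        · exact Or.inr (by rw [hρTdef]; exact Set.indicator_of_mem h _)
      calc (1:ℝ≥0∞) ≤ ∞ := le_top
        _ = chainInt ρT c.1 c.2 := htop.symm
        _ ≤ chainInt ρtot c.1 c.2 := chainInt_mono hle1 _ _
    · push_neg at hpos
      exfalso
      have hqq : c.2 c.1 = c.2 0 := chain_const fun i hi => not_lt.2 (hpos i hi)
      rw [hqq] at hc
      simp at hc
  push_neg at hend
  by_cases hRtop : chainInt R c.1 c.2 = ∞
  · have : chainInt (fun x => lam * R x) c.1 c.2 = ∞ := by
      rw [chainInt_smul, hRtop, ENNReal.mul_top hlam0.ne']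
    calc (1:ℝ≥0∞) ≤ ∞ := le_top
      _ = chainInt (fun x => lam * R x) c.1 c.2 := this.symm
      _ ≤ chainInt ρtot c.1 c.2 := chainInt_mono hle2 _ _
  · exfalso
    by_cases hCg : chainInt g c.1 c.2 = ∞
    · exact hc (hCg ▸ le_top)
    have hq0 := hTc _ hend.1
    have hqN := hTc _ hend.2
    have hbound : ∀ k, ENNReal.ofReal |uj (φ k) (c.2 c.1) - uj (φ k) (c.2 0)| ≤
        chainInt g c.1 c.2 + (2:ℝ≥0∞)⁻¹ ^ k * chainInt R c.1 c.2 := by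
      intro k
      refine (hA (φ k)).trans ?_
      have h1 : ∀ x, gj (φ k) x ≤ g x + e k x := by
        intro x
        calc gj (φ k) x ≤ g x + (gj (φ k) x - g x) := le_add_tsub
          _ ≤ g x + e k x := add_le_add_right le_self_add _
      calc chainInt (gj (φ k)) c.1 c.2
          ≤ chainInt (fun x => g x + e k x) c.1 c.2 := chainInt_mono h1 _ _
        _ = chainInt g c.1 c.2 + chainInt (e k) c.1 c.2 := chainInt_add _ _ _ _
        _ ≤ chainInt g c.1 c.2 + (2:ℝ≥0∞)⁻¹ ^ k * chainInt R c.1 c.2 := by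
            gcongr
            have h2 : chainInt (e k) c.1 c.2 =
                chainInt (fun x => (2:ℝ≥0∞)⁻¹ ^ k * f k x) c.1 c.2 := by
              congr 1
              exact funext fun x => (hcancel k x).symm
            rw [h2, chainInt_smul]
            exact mul_le_mul_right (chainInt_mono (fun x => ENNReal.le_tsum k) _ _) _
    have hL : Tendsto (fun k => ENNReal.ofReal |uj (φ k) (c.2 c.1) - uj (φ k) (c.2 0)|)
        atTop (nhds (ENNReal.ofReal |u (c.2 c.1) - u (c.2 0)|)) := by
      have h1 : Tendsto (fun k => uj (φ k) (c.2 c.1)) atTop (nhds (u (c.2 c.1))) :=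
        hqN.comp hφm.tendsto_atTop
      have h2 : Tendsto (fun k => uj (φ k) (c.2 0)) atTop (nhds (u (c.2 0))) :=
        hq0.comp hφm.tendsto_atTop
      exact ENNReal.tendsto_ofReal ((h1.sub h2).abs)
    have hRt : Tendsto (fun k => chainInt g c.1 c.2 + (2:ℝ≥0∞)⁻¹ ^ k * chainInt R c.1 c.2)
        atTop (nhds (chainInt g c.1 c.2)) := by
      have h1 : Tendsto (fun k => (2:ℝ≥0∞)⁻¹ ^ k * chainInt R c.1 c.2) atTop (nhds 0) := by
        have h2 := ENNReal.tendsto_pow_atTop_nhds_zero_of_lt_one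
          (ENNReal.inv_lt_one.2 ENNReal.one_lt_two)
        simpa using ENNReal.Tendsto.mul_const h2 (Or.inr hRtop)
      simpa using tendsto_const_nhds.add h1
    exact hc (le_of_tendsto_of_tendsto' hL hRt hbound)
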